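/- Contracting an outdegree-one vertex preserves tileability of ω-labeled graphs: let G be an ω-labeled graph (edges labeled by pairs of equal-length words) and let u be a vertex of outdegree exactly 1 whose unique outgoing edge goes to v ≠ u with label (x,y). Form G' by deleting this edge and, for each edge from any w to u labeled (u₁,u₂), replacing it by an edge from w to v labeled (u₁x, u₂y). Then G tiles the plane if and only if G' tiles the plane, and G' has exactly one fewer vertex and one fewer edge than G. -/

import Mathlib

structure WangBar (V C : Type) where
  e : V
  w : V
  n : List C
  s : List C
deriving DecidableEq

/-- A tiling of the plane by a barset `B`: `f` gives the bar covering each cell,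
`g` gives the (1-based) position of the cell inside its bar. -/
def IsBarTiling {V C : Type} (B : Set (WangBar V C)) (f : ℤ → ℤ → WangBar V C)
    (g : ℤ → ℤ → ℕ) : Prop :=
  (∀ i j, f i j ∈ B) ∧
  (∀ i j, 0 < g i j ∧ g i j ≤ (f i j).n.length) ∧
  (∀ i j, g i j < (f i j).n.length → g (i+1) j = g i j + 1 ∧ f (i+1) j = f i j) ∧
  (∀ i j, g i j = (f i j).n.length → g (i+1) j = 1 ∧ (f i j).e = (f (i+1) j).w) ∧
  (∀ i j, (f i j).n[g i j - 1]? = (f i (j+1)).s[g i (j+1) - 1]?)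

/-!
Record a tiling cell by cell: each cell carries its bar and its position in that bar, the
cell east of it either advances inside the bar or is the first cell of a bar whose west color
is the east color of the bar just left, and vertical matching only compares the letters of
cells. Since the only bar with west color `u` is `b₀ = (v, u, x, y)`, in a tiling by `G`
every bar with east color `u` is followed by `b₀`; gluing the two, with the cells of `b₀`
looking back to the bar before them, gives a tiling by `G'` with the same letters in every
cell. Conversely every bar of `G'` is a bar of `G` or such a glued pair, and cutting the pairs
apart again gives a tiling by `G`.
-/

variable {V C : Type}

def WangBar.append (b₁ b₂ : WangBar V C) : WangBar V C :=
  ⟨b₂.e, b₁.w, b₁.n ++ b₂.n, b₁.s ++ b₂.s⟩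

/-- The cell at (1-based) position `pos` of the bar `bar`. -/
structure BarCell (V C : Type) where
  bar : WangBar V C
  pos : ℕ

namespace BarCell

def IsCellOf (B : Set (WangBar V C)) (c : BarCell V C) : Prop :=
  c.bar ∈ B ∧ 0 < c.pos ∧ c.pos ≤ c.bar.n.length

/-- `c'` is the cell to the east of `c` in a row of bars. -/
def Next (c c' : BarCell V C) : Prop :=
  (c.pos < c.bar.n.length ∧ c' = ⟨c.bar, c.pos + 1⟩) ∨
    (c.pos = c.bar.n.length ∧ c'.pos = 1 ∧ c.bar.e = c'.bar.w)

def north (c : BarCell V C) : Option C := c.bar.n[c.pos - 1]?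

def south (c : BarCell V C) : Option C := c.bar.s[c.pos - 1]?

theorem next_of_lt {b : WangBar V C} {k : ℕ} (hk : k < b.n.length) :
    Next ⟨b, k⟩ ⟨b, k + 1⟩ :=
  Or.inl ⟨hk, rfl⟩

theorem next_of_eq {c c' : BarCell V C} (hc : c.pos = c.bar.n.length) (hc' : c'.pos = 1)
    (he : c.bar.e = c'.bar.w) : Next c c' :=
  Or.inr ⟨hc, hc', he⟩

theorem Next.eq_of_one_lt {c c' : BarCell V C} (h : c.Next c') (hc' : 1 < c'.pos) :
    c = ⟨c'.bar, c'.pos - 1⟩ := by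
  obtain ⟨-, rfl⟩ | ⟨-, h1, -⟩ := h
  · rfl
  · omega

theorem Next.e_eq_w {c c' : BarCell V C} (h : c.Next c') (hc : 0 < c.pos) (hc' : c'.pos = 1) :
    c.bar.e = c'.bar.w := by
  obtain ⟨-, rfl⟩ | ⟨-, -, he⟩ := h
  · dsimp only at hc'; omega
  · exact he

end BarCell

open BarCell

def IsCellTiling (B : Set (WangBar V C)) (t : ℤ → ℤ → BarCell V C) : Prop :=
  ∀ i j, (t i j).IsCellOf B ∧ (t i j).Next (t (i + 1) j) ∧ (t i j).north = (t i (j + 1)).south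

theorem isBarTiling_iff_isCellTiling {B : Set (WangBar V C)} {f : ℤ → ℤ → WangBar V C}
    {g : ℤ → ℤ → ℕ} : IsBarTiling B f g ↔ IsCellTiling B fun i j => ⟨f i j, g i j⟩ := by
  constructor
  · rintro ⟨hB, hpos, hin, hend, hnorth⟩ i j
    refine ⟨⟨hB i j, hpos i j⟩, ?_, hnorth i j⟩
    rcases (hpos i j).2.lt_or_eq with hlt | heq
    · obtain ⟨hg, hf⟩ := hin i j hlt
      exact Or.inl ⟨hlt, by simp only [hg, hf]⟩
    · exact Or.inr ⟨heq, hend i j heq⟩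
  · intro h
    refine ⟨fun i j => (h i j).1.1, fun i j => (h i j).1.2, fun i j hlt => ?_, fun i j heq => ?_,
      fun i j => (h i j).2.2⟩
    · obtain ⟨-, hc⟩ | ⟨heq, -⟩ := (h i j).2.1
      · simp only [BarCell.mk.injEq] at hc
        exact ⟨hc.2, hc.1⟩
      · simp only at heq; omega
    · obtain ⟨hlt, -⟩ | ⟨-, hnext⟩ := (h i j).2.1
      · simp only at hlt; omega
      · exact hnext

theorem exists_isBarTiling_iff {B : Set (WangBar V C)} :
    (∃ f g, IsBarTiling B f g) ↔ ∃ t, IsCellTiling B t := by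
  simp only [isBarTiling_iff_isCellTiling]
  exact ⟨fun ⟨f, g, h⟩ => ⟨_, h⟩, fun ⟨t, h⟩ => ⟨fun i j => (t i j).bar, fun i j => (t i j).pos, h⟩⟩

theorem IsCellTiling.mono {B B' : Set (WangBar V C)} {t : ℤ → ℤ → BarCell V C}
    (ht : IsCellTiling B t) (hBB' : B ⊆ B') : IsCellTiling B' t :=
  fun i j => ⟨⟨hBB' (ht i j).1.1, (ht i j).1.2⟩, (ht i j).2⟩

namespace IsCellTiling

variable {B : Set (WangBar V C)} {t : ℤ → ℤ → BarCell V C}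

theorem eq_of_lt_pos (ht : IsCellTiling B t) (i j : ℤ) :
    ∀ n : ℕ, n < (t i j).pos → t (i - n) j = ⟨(t i j).bar, (t i j).pos - n⟩
  | 0, _ => by simp
  | n + 1, hn => by
    have hnext := (ht (i - (n + 1 : ℕ)) j).2.1
    rw [show i - (n + 1 : ℕ) + 1 = i - n by push_cast; ring,
      ht.eq_of_lt_pos i j n (by omega)] at hnext
    rw [hnext.eq_of_one_lt (by dsimp only; omega)]
    simp only [BarCell.mk.injEq, true_and]
    omega

/-- `t (i - (t i j).pos) j` is the last cell of the bar just west of the bar of `t i j`. -/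
theorem e_prev (ht : IsCellTiling B t) (i j : ℤ) :
    (t (i - (t i j).pos) j).bar.e = (t i j).bar.w := by
  have hpos := (ht i j).1.2.1
  have hnext := (ht (i - (t i j).pos) j).2.1
  rw [show i - (t i j).pos + 1 = i - ((t i j).pos - 1 : ℕ) by push_cast [Nat.cast_sub hpos]; ring,
    ht.eq_of_lt_pos i j ((t i j).pos - 1) (by omega)] at hnext
  exact hnext.e_eq_w (ht _ j).1.2.1 (by dsimp only; omega)

end IsCellTiling

/-- `r` lays the cells of the bar `b` out as a run of cells of bars of `B` with the same
letters, running from the first cell of one bar to the last cell of another. -/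
def IsRefinement (B : Set (WangBar V C)) (b : WangBar V C) (r : ℕ → BarCell V C) : Prop :=
  (∀ k, 0 < k → k ≤ b.n.length →
    (r k).IsCellOf B ∧ (r k).north = (⟨b, k⟩ : BarCell V C).north ∧
      (r k).south = (⟨b, k⟩ : BarCell V C).south) ∧
  (∀ k, 0 < k → k < b.n.length → (r k).Next (r (k + 1))) ∧
  (r 1).pos = 1 ∧ (r 1).bar.w = b.w ∧
  (r b.n.length).pos = (r b.n.length).bar.n.length ∧ (r b.n.length).bar.e = b.e

theorem IsCellTiling.exists_of_isRefinement {B B' : Set (WangBar V C)} {t : ℤ → ℤ → BarCell V C}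
    (ht : IsCellTiling B' t) (hB : ∀ b ∈ B', ∃ r, IsRefinement B b r) :
    ∃ t', IsCellTiling B t' := by
  have hB' : ∀ b, ∃ r, b ∈ B' → IsRefinement B b r := fun b => by
    by_cases hb : b ∈ B'
    · exact (hB b hb).imp fun _ hr _ => hr
    · exact ⟨BarCell.mk b, fun hb' => absurd hb' hb⟩
  choose r hr using hB'
  refine ⟨fun i j => r (t i j).bar (t i j).pos, fun i j => ?_⟩
  obtain ⟨⟨hmem, hpos, hle⟩, hnext, hletter⟩ := ht i j
  obtain ⟨hcell, hinner, hfirst, hw, hlast, he⟩ := hr _ hmem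
  refine ⟨(hcell _ hpos hle).1, ?_, ?_⟩ <;> dsimp only
  · obtain ⟨hlt, hnext⟩ | ⟨heq, hone, hew⟩ := hnext
    · rw [hnext]
      exact hinner _ hpos hlt
    · have hfirst' := hr _ (ht (i + 1) j).1.1
      rw [hone, heq]
      exact next_of_eq hlast (hfirst'.2.2.1) (by rw [he, hew, hfirst'.2.2.2.1])
  · obtain ⟨hmem', hpos', hle'⟩ := (ht i (j + 1)).1
    rw [(hcell _ hpos hle).2.1, hletter, ((hr _ hmem').1 _ hpos' hle').2.2]

theorem isRefinement_mk {B : Set (WangBar V C)} {b : WangBar V C} (hb : b ∈ B) :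
    IsRefinement B b (BarCell.mk b) :=
  ⟨fun _ hk hle => ⟨⟨hb, hk, hle⟩, rfl, rfl⟩, fun _ _ hlt => next_of_lt hlt, rfl, rfl, rfl, rfl⟩

/-- Cell `k` of `b₁.append b₂`, read as a cell of `b₁` or of `b₂`. -/
def BarCell.unglue (b₁ b₂ : WangBar V C) (k : ℕ) : BarCell V C :=
  if k ≤ b₁.n.length then ⟨b₁, k⟩ else ⟨b₂, k - b₁.n.length⟩

theorem isRefinement_unglue {B : Set (WangBar V C)} {b₁ b₂ : WangBar V C} (hb₁ : b₁ ∈ B)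
    (hb₂ : b₂ ∈ B) (he : b₁.e = b₂.w) (hn₁ : b₁.n ≠ []) (hn₂ : b₂.n ≠ [])
    (hs₁ : b₁.s.length = b₁.n.length) :
    IsRefinement B (b₁.append b₂) (BarCell.unglue b₁ b₂) := by
  have hl₁ : 1 ≤ b₁.n.length := List.length_pos_iff.mpr hn₁
  have hl₂ := List.length_pos_iff.mpr hn₂
  simp only [IsRefinement, WangBar.append, BarCell.unglue, List.length_append]
  refine ⟨fun k hk hle => ?_, fun k hk hlt => ?_, ?_, ?_, ?_, ?_⟩
  · simp only [BarCell.north, BarCell.south]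
    split_ifs with hk₁
    · refine ⟨⟨hb₁, hk, hk₁⟩, ?_, ?_⟩
      · rw [List.getElem?_append_left (by omega)]
      · rw [List.getElem?_append_left (by omega)]
    · refine ⟨⟨hb₂, by dsimp only; omega, by dsimp only; omega⟩, ?_, ?_⟩ <;> dsimp only
      · rw [List.getElem?_append_right (by omega)]; congr 1; omega
      · rw [List.getElem?_append_right (by omega), hs₁]; congr 1; omega
  · split_ifs with hk₁ hk₂ hk₂
    · exact next_of_lt (by omega)
    · exact next_of_eq (by dsimp only; omega) (by dsimp only; omega) he
    · omega
    · rw [show k + 1 - b₁.n.length = k - b₁.n.length + 1 by omega]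
      exact next_of_lt (by omega)
  · rw [if_pos hl₁]
  · rw [if_pos hl₁]
  · simp [hn₂]
  · simp [hn₂]

def glueBars (B : Set (WangBar V C)) (b₀ : WangBar V C) : Set (WangBar V C) :=
  {b ∈ B | b.e ≠ b₀.w ∧ b.w ≠ b₀.w} ∪ (·.append b₀) '' {p ∈ B | p.e = b₀.w}

/-- The cell `c` after `b₀` is glued onto every bar ending in color `b₀.w`, where `p` is the
bar just west of the bar of `c`. -/
def BarCell.glue [DecidableEq V] (b₀ p : WangBar V C) (c : BarCell V C) : BarCell V C :=
  if c.bar.e = b₀.w then ⟨c.bar.append b₀, c.pos⟩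
  else if c.bar.w = b₀.w then ⟨p.append b₀, p.n.length + c.pos⟩
  else c

namespace BarCell

variable [DecidableEq V] {B : Set (WangBar V C)} {b₀ p : WangBar V C} {c c' : BarCell V C}

theorem glue_isCellOf (hw : ∀ b ∈ B, b.w = b₀.w → b = b₀) (hc : c.IsCellOf B) (hp : p ∈ B)
    (hpc : p.e = c.bar.w) : (c.glue b₀ p).IsCellOf (glueBars B b₀) := by
  obtain ⟨hcB, hpos, hle⟩ := hc
  unfold glue
  split_ifs with he hw'
  · refine ⟨Or.inr ⟨c.bar, ⟨hcB, he⟩, rfl⟩, hpos, ?_⟩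
    simp only [WangBar.append, List.length_append]; omega
  · obtain rfl := hw _ hcB hw'
    refine ⟨Or.inr ⟨p, ⟨hp, hpc.trans hw'⟩, rfl⟩, ?_⟩
    simp only [WangBar.append, List.length_append]; omega
  · exact ⟨Or.inl ⟨hcB, he, hw'⟩, hpos, hle⟩

theorem north_glue (hw : ∀ b ∈ B, b.w = b₀.w → b = b₀) (hc : c.IsCellOf B) :
    (c.glue b₀ p).north = c.north := by
  obtain ⟨hcB, hpos, hle⟩ := hc
  unfold glue north
  split_ifs with he hw'
  · exact List.getElem?_append_left (by dsimp only; omega)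
  · obtain rfl := hw _ hcB hw'
    dsimp only [WangBar.append]
    rw [List.getElem?_append_right (by omega)]
    congr 1; omega
  · rfl

theorem south_glue (hw : ∀ b ∈ B, b.w = b₀.w → b = b₀)
    (hs : ∀ b ∈ B, b.s.length = b.n.length) (hc : c.IsCellOf B) (hp : p ∈ B) :
    (c.glue b₀ p).south = c.south := by
  obtain ⟨hcB, hpos, hle⟩ := hc
  unfold glue south
  split_ifs with he hw'
  · exact List.getElem?_append_left (by dsimp only; rw [hs _ hcB]; omega)
  · obtain rfl := hw _ hcB hw'
    dsimp only [WangBar.append]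
    rw [List.getElem?_append_right (by rw [hs _ hp]; omega), hs _ hp]
    congr 1; omega
  · rfl

theorem glue_next_of_lt (hw : ∀ b ∈ B, b.w = b₀.w → b = b₀) (hc : c.IsCellOf B)
    (hlt : c.pos < c.bar.n.length) :
    (c.glue b₀ p).Next ((⟨c.bar, c.pos + 1⟩ : BarCell V C).glue b₀ p) := by
  unfold glue
  dsimp only
  split_ifs with he hw'
  · exact next_of_lt (by simp only [WangBar.append, List.length_append]; omega)
  · obtain rfl := hw _ hc.1 hw'
    exact next_of_lt (by simp only [WangBar.append, List.length_append]; omega)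
  · exact next_of_lt hlt

theorem glue_next_of_eq (hw : ∀ b ∈ B, b.w = b₀.w → b = b₀) (he₀ : b₀.e ≠ b₀.w)
    (hc : c.IsCellOf B) (hc' : c'.IsCellOf B) (hlast : c.pos = c.bar.n.length)
    (hfirst : c'.pos = 1) (hcc' : c.bar.e = c'.bar.w) :
    (c.glue b₀ p).Next (c'.glue b₀ c.bar) := by
  by_cases he : c.bar.e = b₀.w
  · obtain rfl := hw _ hc'.1 (hcc'.symm.trans he)
    have hc'len := hc'.2.2
    unfold glue
    rw [if_pos he, if_neg he₀, if_pos rfl, hfirst, ← hlast]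
    exact next_of_lt (by simp only [WangBar.append, List.length_append]; omega)
  · have hleft : (c.glue b₀ p).pos = (c.glue b₀ p).bar.n.length ∧
        (c.glue b₀ p).bar.e = c.bar.e := by
      unfold glue
      rw [if_neg he]
      split_ifs with hw'
      · obtain rfl := hw _ hc.1 hw'
        simp only [WangBar.append, List.length_append, hlast, and_self]
      · exact ⟨hlast, rfl⟩
    have hright : (c'.glue b₀ c.bar).pos = 1 ∧ (c'.glue b₀ c.bar).bar.w = c'.bar.w := by
      have hw' : c'.bar.w ≠ b₀.w := hcc' ▸ he
      unfold glue
      rw [if_neg hw']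
      split_ifs <;> exact ⟨hfirst, rfl⟩
    exact next_of_eq hleft.1 hright.1 (by rw [hleft.2, hright.2, hcc'])

end BarCell

theorem IsCellTiling.glue [DecidableEq V] {B : Set (WangBar V C)} {b₀ : WangBar V C}
    {t : ℤ → ℤ → BarCell V C} (ht : IsCellTiling B t) (hw : ∀ b ∈ B, b.w = b₀.w → b = b₀)
    (he₀ : b₀.e ≠ b₀.w) (hs : ∀ b ∈ B, b.s.length = b.n.length) :
    IsCellTiling (glueBars B b₀) fun i j => (t i j).glue b₀ (t (i - (t i j).pos) j).bar := by
  intro i j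
  refine ⟨glue_isCellOf hw (ht i j).1 (ht _ j).1.1 (ht.e_prev i j), ?_, ?_⟩ <;> dsimp only
  · obtain ⟨hlt, hnext⟩ | ⟨hlast, hfirst, hcc'⟩ := (ht i j).2.1
    · rw [hnext, show i + 1 - ((t i j).pos + 1 : ℕ) = i - (t i j).pos by push_cast; ring]
      exact glue_next_of_lt hw (ht i j).1 hlt
    · rw [hfirst, show i + 1 - ((1 : ℕ) : ℤ) = i by push_cast; ring]
      exact glue_next_of_eq hw he₀ (ht i j).1 (ht (i + 1) j).1 hlast hfirst hcc'
  · rw [north_glue hw (ht i j).1, south_glue hw hs (ht i (j + 1)).1 (ht _ (j + 1)).1.1]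
    exact (ht i j).2.2

theorem Fintype.card_subtype_ne_add_one {α : Type*} [Fintype α] [DecidableEq α] (a : α) :
    Fintype.card {x : α // x ≠ a} + 1 = Fintype.card α := by
  rw [Fintype.card_subtype_compl, Fintype.card_subtype_eq]
  have := Fintype.card_pos_iff.mpr ⟨a⟩
  omega

theorem stmt16 {C V E : Type} [Fintype V] [Fintype E] [DecidableEq V] [DecidableEq E]
    (src tgt : E → V) (label : E → List C × List C)
    (hlab : ∀ e, (label e).1.length = (label e).2.length)
    (hpos : ∀ e, (label e).1 ≠ [])
    (u v : V) (huv : v ≠ u) (e₀ : E)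
    (hsrc : src e₀ = u) (htgt : tgt e₀ = v)
    (hout : ∀ e, src e = u → e = e₀) :
    ((∃ f g, IsBarTiling
        {b : WangBar V C | ∃ e : E, b = ⟨tgt e, src e, (label e).1, (label e).2⟩} f g) ↔
      (∃ f g, IsBarTiling
        {b : WangBar V C | ∃ e : E, e ≠ e₀ ∧
          ((tgt e ≠ u ∧ b = ⟨tgt e, src e, (label e).1, (label e).2⟩) ∨
           (tgt e = u ∧
             b = ⟨v, src e, (label e).1 ++ (label e₀).1, (label e).2 ++ (label e₀).2⟩))} f g)) ∧
    Fintype.card {w : V // w ≠ u} + 1 = Fintype.card V ∧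
    Fintype.card {e : E // e ≠ e₀} + 1 = Fintype.card E := by
  set b₀ : WangBar V C := ⟨v, u, (label e₀).1, (label e₀).2⟩
  have hb₀ : b₀ = ⟨tgt e₀, src e₀, (label e₀).1, (label e₀).2⟩ := by rw [hsrc, htgt]
  refine ⟨?_, Fintype.card_subtype_ne_add_one u, Fintype.card_subtype_ne_add_one e₀⟩
  rw [exists_isBarTiling_iff, exists_isBarTiling_iff]
  constructor
  · rintro ⟨t, ht⟩
    have hw : ∀ b ∈ {b : WangBar V C | ∃ e : E, b = ⟨tgt e, src e, (label e).1, (label e).2⟩},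
        b.w = b₀.w → b = b₀ := by
      rintro _ ⟨e, rfl⟩ he
      rw [hout e he, hb₀]
    refine ⟨_, (ht.glue hw huv fun b ⟨e, hb⟩ => hb ▸ (hlab e).symm).mono ?_⟩
    rintro _ (⟨⟨e, rfl⟩, hte, hse⟩ | ⟨_, ⟨⟨e, rfl⟩, hte⟩, rfl⟩)
    · exact ⟨e, fun h => hse (h ▸ hsrc), Or.inl ⟨hte, rfl⟩⟩
    · exact ⟨e, fun h => huv (htgt.symm.trans (h ▸ hte)), Or.inr ⟨hte, rfl⟩⟩
  · rintro ⟨t, ht⟩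
    refine ht.exists_of_isRefinement ?_
    rintro _ ⟨e, -, ⟨-, rfl⟩ | ⟨hte, rfl⟩⟩
    · exact ⟨_, isRefinement_mk ⟨e, rfl⟩⟩
    · refine ⟨_, isRefinement_unglue (b₁ := ⟨u, src e, (label e).1, (label e).2⟩) (b₂ := b₀)
        ?_ ?_ rfl (hpos e) (hpos e₀) (hlab e).symm⟩
      exacts [⟨e, by rw [hte]⟩, ⟨e₀, hb₀⟩]
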